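/- Density propagation on the negative quadrant: let ρ(x_1,x_2) = exp(x_1 + x_2) (which equals exp(−(|x_1| + |x_2|)) on the negative quadrant). Then for all x_1 < 0, x_2 < 0 and all c_1, c_2 ≥ 0, ∇ρ(x_1,x_2)·(f_1(x_1,x_2), f_2(x_1,x_2)) ≥ 25·ρ(x_1,x_2)·(|g(x_1)| + |g(x_2)| + h(x_1) + h(x_2)) > 0. -/
import Mathlib


noncomputable section

/-- The constant `a = (4π²n + 3π²)/2`. -/
def a (n : ℕ) : ℝ := (4 * Real.pi ^ 2 * n + 3 * Real.pi ^ 2) / 2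

/-- The function `g` from the example. -/
def g (n : ℕ) (r : ℝ) : ℝ :=
  if |r| ≤ a n then
    Real.tanh (2 * r) +
      ∑ i ∈ Finset.Icc 1 n,
        Real.sign r * (1 + Real.sign r * Real.tanh (2 * (r - Real.sign r * (2 * Real.pi ^ 2 * i))))
  else
    Real.sign r * ((2 * n + 1) + (r - Real.sign r * a n) ^ 2)

/-- The function `h` from the example. -/
def h (n : ℕ) (r : ℝ) : ℝ :=
  Real.sin (r / (2 * Real.pi)) ^ 2 +
    ∑ i ∈ Finset.Icc 1 n,
      (Real.tanh (r - 2 * Real.pi ^ 2 * i) + 1) * Real.sin (r / (2 * Real.pi)) ^ 2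

/-- The vector field of subsystem `i`: its own state comes first, the other
subsystem's state second; `c` stands for `‖uᵢ‖_∞ / (a + 1)`. -/
def fvec (n : ℕ) (c : ℝ) (x y : ℝ) : ℝ :=
  -(25 + c) * g n x + 25 * h n y + c ^ 2

/-- The density `ρ(x₁,x₂) = e^{x₁+x₂}` (equal to `e^{-(|x₁|+|x₂|)}` on the
negative quadrant). -/
def ρneg : ℝ × ℝ → ℝ := fun p => Real.exp (p.1 + p.2)

lemma tanh_lt_one' (x : ℝ) : Real.tanh x < 1 := by
  rw [Real.tanh_eq_sinh_div_cosh, div_lt_one (Real.cosh_pos _)]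
  rw [Real.sinh_eq, Real.cosh_eq]
  nlinarith [Real.exp_pos (-x)]

lemma neg_one_lt_tanh' (x : ℝ) : -1 < Real.tanh x := by
  rw [Real.tanh_eq_sinh_div_cosh, lt_div_iff₀ (Real.cosh_pos _)]
  rw [Real.sinh_eq, Real.cosh_eq]
  nlinarith [Real.exp_pos x]

lemma tanh_neg_of_neg {x : ℝ} (hx : x < 0) : Real.tanh x < 0 := by
  rw [Real.tanh_eq_sinh_div_cosh]
  exact div_neg_of_neg_of_pos (by rw [Real.sinh_eq]; nlinarith [Real.exp_lt_exp.2 (show x < -x by linarith)]) (Real.cosh_pos _)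

lemma g_neg {n : ℕ} {r : ℝ} (hr : r < 0) : g n r < 0 := by
  have hs : Real.sign r = -1 := Real.sign_of_neg hr
  unfold g
  split_ifs with hle
  · have hsum : (∑ i ∈ Finset.Icc 1 n,
        Real.sign r * (1 + Real.sign r * Real.tanh (2 * (r - Real.sign r * (2 * Real.pi ^ 2 * i))))) ≤ 0 := by
      apply Finset.sum_nonpos
      intro i _
      rw [hs]
      nlinarith [tanh_lt_one' (2 * (r - -1 * (2 * Real.pi ^ 2 * i)))]
    have := tanh_neg_of_neg (show (2:ℝ) * r < 0 by linarith)
    linarith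
  · rw [hs]
    nlinarith [sq_nonneg (r - -1 * a n), Nat.cast_nonneg (α := ℝ) n]

lemma h_nonneg (n : ℕ) (r : ℝ) : 0 ≤ h n r := by
  unfold h
  have hsum : 0 ≤ ∑ i ∈ Finset.Icc 1 n,
      (Real.tanh (r - 2 * Real.pi ^ 2 * i) + 1) * Real.sin (r / (2 * Real.pi)) ^ 2 := by
    apply Finset.sum_nonneg
    intro i _
    have := neg_one_lt_tanh' (r - 2 * Real.pi ^ 2 * i)
    nlinarith [sq_nonneg (Real.sin (r / (2 * Real.pi)))]
  positivity

lemma fderiv_rho (p : ℝ × ℝ) (v : ℝ × ℝ) :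
    fderiv ℝ ρneg p v = Real.exp (p.1 + p.2) * (v.1 + v.2) := by
  have hd : HasFDerivAt ρneg
      (Real.exp (p.1 + p.2) • ((ContinuousLinearMap.fst ℝ ℝ ℝ) + (ContinuousLinearMap.snd ℝ ℝ ℝ))) p :=
    (hasFDerivAt_fst.add hasFDerivAt_snd).exp
  rw [hd.fderiv]
  simp [mul_add]

/-- density propagation on the negative quadrant. -/
theorem density_propagation_negative_quadrant (n : ℕ) (c₁ c₂ : ℝ)
    (hc₁ : 0 ≤ c₁) (hc₂ : 0 ≤ c₂) (x₁ x₂ : ℝ) (hx₁ : x₁ < 0) (hx₂ : x₂ < 0) :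
    25 * ρneg (x₁, x₂) * (|g n x₁| + |g n x₂| + h n x₁ + h n x₂) ≤
      fderiv ℝ ρneg (x₁, x₂) (fvec n c₁ x₁ x₂, fvec n c₂ x₂ x₁) ∧
    0 < 25 * ρneg (x₁, x₂) * (|g n x₁| + |g n x₂| + h n x₁ + h n x₂) := by
  have hg₁ := g_neg (n := n) hx₁
  have hg₂ := g_neg (n := n) hx₂
  have hh₁ := h_nonneg n x₁
  have hh₂ := h_nonneg n x₂
  have ha₁ : |g n x₁| = -g n x₁ := abs_of_neg hg₁
  have ha₂ : |g n x₂| = -g n x₂ := abs_of_neg hg₂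
  have hE : 0 < Real.exp (x₁ + x₂) := Real.exp_pos _
  constructor
  · rw [fderiv_rho]
    simp only [ρneg, fvec, ha₁, ha₂]
    nlinarith [mul_nonneg hc₁ (neg_nonneg.2 hg₁.le), mul_nonneg hc₂ (neg_nonneg.2 hg₂.le),
      sq_nonneg c₁, sq_nonneg c₂]
  · simp only [ρneg, ha₁, ha₂]
    nlinarith


end
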